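/- Let a, b > 0 and define f(p) = Σ_{k=1}^K log₂(1 + p_k a_k / b_k) / (ρ Σ_{k=1}^K p_k + P₀) for p ∈ ℝ^K_{>0}, with a_k, b_k > 0, ρ > 0, P₀ > 0. Then f is bounded above and f(p) → 0 as Σ_k p_k → ∞; in particular the supremum of f over the feasible set {p ≥ 0 : Σ_k p_k ≤ P} is attained and is nondecreasing in P, and is constant in P for all P sufficiently large. -/

import Mathlib

/-!
With `gₖ = aₖ / bₖ` we have `log₂ (1 + pₖ gₖ) ≤ log₂ (1 + ∑ⱼ pⱼ) + log₂ (1 + gₖ)`, so the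
numerator grows only logarithmically in the total power `s = ∑ₖ pₖ`, while the denominator
`ρ s + P₀` grows linearly; hence the energy efficiency tends to `0` as `s → ∞`. Therefore
either it vanishes identically on the orthant, or beyond some total power `T` it stays below
its value at a fixed feasible point `p₀`; once the budget exceeds both `T` and `∑ p₀`,
enlarging it only adds points that cannot beat `p₀`, so the supremum saturates.
Boundedness and attainment follow from continuity on the compact sets `{p ≥ 0 : ∑ₖ pₖ ≤ P}`.
-/

open Real Finset Filter Topology

section Sublevel

variable {X : Type*} {f s : X → ℝ} {C : Set X}

lemma forall_abs_lt_of_le_of_tendsto {g : ℝ → ℝ} (hf₀ : ∀ x ∈ C, 0 ≤ f x)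
    (hfg : ∀ x ∈ C, f x ≤ g (s x)) (hg : Tendsto g atTop (𝓝 0)) :
    ∀ ε > (0 : ℝ), ∃ T : ℝ, ∀ x ∈ C, T ≤ s x → |f x| < ε := by
  intro ε hε
  obtain ⟨T, hT⟩ := Metric.tendsto_atTop.mp hg ε hε
  refine ⟨T, fun x hx hTx => ?_⟩
  have hgx : |g (s x)| < ε := by simpa only [Real.dist_eq, sub_zero] using hT (s x) hTx
  rw [abs_of_nonneg (hf₀ x hx)]
  exact (hfg x hx).trans_lt ((le_abs_self _).trans_lt hgx)

lemma exists_forall_le_of_forall_abs_lt (hC : C.Nonempty) (hf₀ : ∀ x ∈ C, 0 ≤ f x)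
    (hdecay : ∀ ε > (0 : ℝ), ∃ T : ℝ, ∀ x ∈ C, T ≤ s x → |f x| < ε) :
    ∃ x₀ ∈ C, ∃ T : ℝ, ∀ x ∈ C, T ≤ s x → f x ≤ f x₀ := by
  by_cases hpos : ∃ x₀ ∈ C, 0 < f x₀
  · obtain ⟨x₀, hx₀, hfx₀⟩ := hpos
    obtain ⟨T, hT⟩ := hdecay (f x₀) hfx₀
    exact ⟨x₀, hx₀, T, fun x hx hTx => (le_abs_self _).trans (hT x hx hTx).le⟩
  · push Not at hpos
    obtain ⟨x₀, hx₀⟩ := hC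
    exact ⟨x₀, hx₀, 0, fun x hx _ => (hpos x hx).trans (hf₀ x₀ hx₀)⟩

lemma bddAbove_image_of_forall_le [TopologicalSpace X] {T M : ℝ}
    (hK : IsCompact {x | x ∈ C ∧ s x ≤ T}) (hf : ContinuousOn f {x | x ∈ C ∧ s x ≤ T})
    (hT : ∀ x ∈ C, T ≤ s x → f x ≤ M) : BddAbove (f '' C) := by
  obtain ⟨B, hB⟩ := hK.bddAbove_image hf
  refine ⟨max M B, ?_⟩
  rintro _ ⟨x, hx, rfl⟩
  rcases le_total T (s x) with hTx | hxT
  · exact (hT x hx hTx).trans (le_max_left _ _)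
  · exact (hB ⟨x, ⟨hx, hxT⟩, rfl⟩).trans (le_max_right _ _)

lemma sSup_image_sublevel_mono (hbdd : BddAbove (f '' C)) {x₀ : X} (hx₀ : x₀ ∈ C)
    {P P' : ℝ} (hx₀P : s x₀ ≤ P) (hPP' : P ≤ P') :
    sSup (f '' {x | x ∈ C ∧ s x ≤ P}) ≤ sSup (f '' {x | x ∈ C ∧ s x ≤ P'}) :=
  csSup_le_csSup (hbdd.mono (Set.image_mono fun _ hx => hx.1)) ⟨f x₀, x₀, ⟨hx₀, hx₀P⟩, rfl⟩
    (Set.image_mono fun _ hx => ⟨hx.1, hx.2.trans hPP'⟩)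

lemma sSup_image_sublevel_eq (hbdd : BddAbove (f '' C)) {x₀ : X} (hx₀ : x₀ ∈ C) {T : ℝ}
    (hT : ∀ x ∈ C, T ≤ s x → f x ≤ f x₀) {Q P : ℝ} (hTQ : T ≤ Q) (hx₀Q : s x₀ ≤ Q)
    (hQP : Q ≤ P) :
    sSup (f '' {x | x ∈ C ∧ s x ≤ P}) = sSup (f '' {x | x ∈ C ∧ s x ≤ Q}) := by
  have hbddQ : BddAbove (f '' {x | x ∈ C ∧ s x ≤ Q}) :=
    hbdd.mono (Set.image_mono fun _ hx => hx.1)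
  refine le_antisymm ?_ (sSup_image_sublevel_mono hbdd hx₀ hx₀Q hQP)
  refine csSup_le ⟨f x₀, x₀, ⟨hx₀, hx₀Q.trans hQP⟩, rfl⟩ ?_
  rintro _ ⟨x, ⟨hx, -⟩, rfl⟩
  rcases le_total (s x) Q with hxQ | hQx
  · exact le_csSup hbddQ ⟨x, ⟨hx, hxQ⟩, rfl⟩
  · exact (hT x hx (hTQ.trans hQx)).trans (le_csSup hbddQ ⟨x₀, ⟨hx₀, hx₀Q⟩, rfl⟩)

end Sublevel

lemma isCompact_nonneg_sum_le {ι : Type*} [Fintype ι] (P : ℝ) :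
    IsCompact {p : ι → ℝ | (∀ k, 0 ≤ p k) ∧ ∑ k, p k ≤ P} := by
  refine (isCompact_Icc (a := (0 : ι → ℝ)) (b := fun _ => P)).of_isClosed_subset ?_ ?_
  · exact (isClosed_Ici (a := (0 : ι → ℝ))).inter
      (isClosed_le (continuous_finsetSum _ fun k _ => continuous_apply k) continuous_const)
  · rintro p ⟨hp, hpP⟩
    exact ⟨hp, fun k => (single_le_sum (fun j _ => hp j) (mem_univ k)).trans hpP⟩

lemma logb_one_add_mul_le {B x s g : ℝ} (hB : 1 < B) (hx : 0 ≤ x) (hxs : x ≤ s) (hg : 0 ≤ g) :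
    logb B (1 + x * g) ≤ logb B (1 + s) + logb B (1 + g) := by
  rw [← logb_mul (by linarith) (by linarith)]
  exact logb_le_logb_of_le hB (by positivity) (by nlinarith)

lemma tendsto_mul_logb_one_add_add_div_atTop {B ρ P₀ : ℝ} (c d : ℝ) (hρ : ρ ≠ 0) :
    Tendsto (fun s => (c * logb B (1 + s) + d) / (ρ * s + P₀)) atTop (𝓝 0) := by
  have hpow (n : ℕ) : Tendsto (fun s => log (1 + s) ^ n / (ρ * s + P₀)) atTop (𝓝 0) := by
    refine ((tendsto_pow_log_div_mul_add_atTop ρ (P₀ - ρ) n hρ).comp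
      (tendsto_atTop_add_const_left atTop 1 tendsto_id)).congr fun s => ?_
    simp only [Function.comp_apply, id]
    ring_nf
  have := ((hpow 1).const_mul (c / log B)).add ((hpow 0).const_mul d)
  rw [mul_zero, mul_zero, add_zero] at this
  refine this.congr fun s => ?_
  rw [logb]
  ring

section EnergyEfficiency

variable {ι : Type*} [Fintype ι]

noncomputable def energyEfficiency (g : ι → ℝ) (ρ P₀ : ℝ) (p : ι → ℝ) : ℝ :=
  (∑ k, logb 2 (1 + p k * g k)) / (ρ * ∑ k, p k + P₀)

variable {g : ι → ℝ} {ρ P₀ : ℝ}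

lemma one_le_one_add_mul {x y : ℝ} (hx : 0 ≤ x) (hy : 0 ≤ y) : 1 ≤ 1 + x * y :=
  le_add_of_nonneg_right (mul_nonneg hx hy)

lemma energyEfficiency_nonneg (hg : ∀ k, 0 ≤ g k) (hρ : 0 ≤ ρ) (hP₀ : 0 ≤ P₀) {p : ι → ℝ}
    (hp : ∀ k, 0 ≤ p k) : 0 ≤ energyEfficiency g ρ P₀ p :=
  div_nonneg (sum_nonneg fun k _ => logb_nonneg one_lt_two (one_le_one_add_mul (hp k) (hg k)))
    (add_nonneg (mul_nonneg hρ (sum_nonneg fun k _ => hp k)) hP₀)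

lemma energyEfficiency_le (hg : ∀ k, 0 ≤ g k) (hρ : 0 ≤ ρ) (hP₀ : 0 ≤ P₀) {p : ι → ℝ}
    (hp : ∀ k, 0 ≤ p k) :
    energyEfficiency g ρ P₀ p ≤
      (Fintype.card ι * logb 2 (1 + ∑ k, p k) + ∑ k, logb 2 (1 + g k)) /
        (ρ * ∑ k, p k + P₀) := by
  refine div_le_div_of_nonneg_right ?_
    (add_nonneg (mul_nonneg hρ (sum_nonneg fun k _ => hp k)) hP₀)
  calc ∑ k, logb 2 (1 + p k * g k)
      ≤ ∑ k, (logb 2 (1 + ∑ j, p j) + logb 2 (1 + g k)) :=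
        sum_le_sum fun k _ => logb_one_add_mul_le one_lt_two (hp k)
          (single_le_sum (fun j _ => hp j) (mem_univ k)) (hg k)
    _ = Fintype.card ι * logb 2 (1 + ∑ k, p k) + ∑ k, logb 2 (1 + g k) := by
        rw [sum_add_distrib, sum_const, card_univ, nsmul_eq_mul]

lemma continuousOn_energyEfficiency (hg : ∀ k, 0 ≤ g k) (hρ : 0 ≤ ρ) (hP₀ : 0 < P₀) :
    ContinuousOn (energyEfficiency g ρ P₀) {p | ∀ k, 0 ≤ p k} := by
  refine ContinuousOn.div ?_ (by fun_prop) fun p hp =>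
    (add_pos_of_nonneg_of_pos (mul_nonneg hρ (sum_nonneg fun k _ => hp k)) hP₀).ne'
  refine continuousOn_finsetSum _ fun k _ => ContinuousOn.logb (by fun_prop) fun p hp => ?_
  exact (zero_lt_one.trans_le (one_le_one_add_mul (hp k) (hg k))).ne'

end EnergyEfficiency

/-- Saturation of energy efficiency in the power budget: with
`f(p) = (∑ₖ log₂(1 + pₖaₖ/bₖ))/(ρ∑ₖ pₖ + P₀)`, the function is bounded above on the
nonnegative orthant, tends to `0` as `∑ₖ pₖ → ∞`, its supremum over
`{p ≥ 0 : ∑ₖ pₖ ≤ P}` is attained and nondecreasing in `P`, and is constant in `P`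
for all sufficiently large `P`. -/
theorem ee_saturation {K : ℕ} (a b : Fin K → ℝ) (ρ P0 : ℝ)
    (ha : ∀ k, 0 < a k) (hb : ∀ k, 0 < b k) (hρ : 0 < ρ) (hP0 : 0 < P0) :
    let f : (Fin K → ℝ) → ℝ :=
      fun p => (∑ k, Real.logb 2 (1 + p k * a k / b k)) / (ρ * ∑ k, p k + P0)
    (∃ Cb : ℝ, ∀ p : Fin K → ℝ, (∀ k, 0 ≤ p k) → f p ≤ Cb) ∧
    (∀ ε > (0 : ℝ), ∃ T : ℝ, ∀ p : Fin K → ℝ, (∀ k, 0 ≤ p k) → T ≤ ∑ k, p k →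
      |f p| < ε) ∧
    (∀ P > (0 : ℝ), ∃ p : Fin K → ℝ, (∀ k, 0 ≤ p k) ∧ (∑ k, p k) ≤ P ∧
      ∀ q : Fin K → ℝ, (∀ k, 0 ≤ q k) → (∑ k, q k) ≤ P → f q ≤ f p) ∧
    (∀ P P' : ℝ, 0 < P → P ≤ P' →
      sSup (f '' {p | (∀ k, 0 ≤ p k) ∧ (∑ k, p k) ≤ P}) ≤
        sSup (f '' {p | (∀ k, 0 ≤ p k) ∧ (∑ k, p k) ≤ P'})) ∧
    (∃ Pbig > (0 : ℝ), ∀ P : ℝ, Pbig ≤ P →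
      sSup (f '' {p | (∀ k, 0 ≤ p k) ∧ (∑ k, p k) ≤ P}) =
        sSup (f '' {p | (∀ k, 0 ≤ p k) ∧ (∑ k, p k) ≤ Pbig})) := by
  intro f
  have hg : ∀ k, 0 ≤ a k / b k := fun k => (div_pos (ha k) (hb k)).le
  set C : Set (Fin K → ℝ) := {p | ∀ k, 0 ≤ p k}
  have hf : f = energyEfficiency (fun k => a k / b k) ρ P0 := by
    funext p
    simp only [f, energyEfficiency, mul_div_assoc]
  have h0 : (0 : Fin K → ℝ) ∈ C := fun _ => le_rfl
  have hf₀ : ∀ p ∈ C, 0 ≤ f p := hf ▸ fun _ => energyEfficiency_nonneg hg hρ.le hP0.le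
  have hcont : ContinuousOn f C := hf ▸ continuousOn_energyEfficiency hg hρ.le hP0
  have hdecay : ∀ ε > (0 : ℝ), ∃ T : ℝ, ∀ p ∈ C, T ≤ ∑ k, p k → |f p| < ε :=
    forall_abs_lt_of_le_of_tendsto hf₀ (hf ▸ fun _ => energyEfficiency_le hg hρ.le hP0.le)
      (tendsto_mul_logb_one_add_add_div_atTop _ _ hρ.ne')
  obtain ⟨p₀, hp₀, T, hT⟩ := exists_forall_le_of_forall_abs_lt ⟨0, h0⟩ hf₀ hdecay
  have hbdd := bddAbove_image_of_forall_le (isCompact_nonneg_sum_le T)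
    (hcont.mono fun _ hp => hp.1) hT
  refine ⟨?_, hdecay, fun P hP => ?_, fun P P' hP hPP' =>
    sSup_image_sublevel_mono hbdd h0 (by simpa using hP.le) hPP', ?_⟩
  · obtain ⟨M, hM⟩ := hbdd
    exact ⟨M, fun p hp => hM ⟨p, hp, rfl⟩⟩
  · obtain ⟨p, hp, hmax⟩ := (isCompact_nonneg_sum_le P).exists_isMaxOn
      ⟨0, h0, by simpa using hP.le⟩ (hcont.mono fun _ hp => hp.1)
    exact ⟨p, hp.1, hp.2, fun q hq hqP => hmax ⟨hq, hqP⟩⟩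
  · set Q := max (max T (∑ k, p₀ k)) 1
    refine ⟨Q, zero_lt_one.trans_le (le_max_right _ _), fun P hQP =>
      sSup_image_sublevel_eq hbdd hp₀ hT ?_ ?_ hQP⟩
    · exact (le_max_left _ _).trans (le_max_left _ _)
    · exact (le_max_right _ _).trans (le_max_left _ _)
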